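/- arXiv:2512.06383 — 4 statements merged into one kernel-verified Lean document; each statement's English description precedes it below -/
import Mathlib

section
/- If T is a twin cover of a graph H, u ∈ T, v ∉ T, and u and v are twins in H (i.e., N(u)\{v} = N(v)\{u}), then T \ {u} is also a twin cover of H. (A twin cover is a vertex set hitting every non-twin edge, where an edge {x,y} is a twin edge if x and y are twins.) -/
/-- Two vertices `u`, `v` are twins: `N(u) \ {v} = N(v) \ {u}`. -/
def Twins {V : Type*} (G : SimpleGraph V) (u v : V) : Prop :=
  G.neighborSet u \ {v} = G.neighborSet v \ {u}

/-- A twin cover: every non-twin edge has at least one endpoint in `S`. -/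
def IsTwinCover {V : Type*} (G : SimpleGraph V) (S : Set V) : Prop :=
  ∀ u v : V, G.Adj u v → ¬ Twins G u v → u ∈ S ∨ v ∈ S

lemma twins_symm {V : Type*} {G : SimpleGraph V} {a b : V} (h : Twins G a b) :
    Twins G b a := h.symm

lemma mem_twins {V : Type*} {G : SimpleGraph V} {a b w : V} (h : Twins G a b)
    (hw : G.Adj a w) (hwb : w ≠ b) : G.Adj b w := by
  have : w ∈ G.neighborSet a \ {b} := ⟨hw, hwb⟩
  rw [h] at this
  exact this.1

/-- If `u,v` are twins, `v ∉ T`, and `y` is a neighbor of `u` that is not a twin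
of `u`, then `y ∈ T`. -/
lemma key {V : Type*} {H : SimpleGraph V} {T : Set V} {u v : V}
    (hT : IsTwinCover H T) (hv : v ∉ T) (huv2 : u ≠ v) (htw : Twins H u v) :
    ∀ y, H.Adj u y → ¬ Twins H u y → y ∈ T := by
  intro y hadj hntw
  by_cases hyv : y = v
  · subst hyv; exact absurd htw hntw
  have hvy : H.Adj v y := mem_twins htw hadj hyv
  by_cases hyT : y ∈ T
  · exact hyT
  exfalso
  have htvy : Twins H v y := by
    by_contra hnt
    rcases hT v y hvy hnt with h | h
    · exact hv h
    · exact hyT h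
  apply hntw
  ext w
  simp only [Set.mem_diff, SimpleGraph.mem_neighborSet, Set.mem_singleton_iff]
  constructor
  · rintro ⟨hw, hwy⟩
    by_cases hwv : w = v
    · subst hwv
      exact ⟨hvy.symm, Ne.symm huv2⟩
    · have h1 : H.Adj v w := mem_twins htw hw hwv
      have h2 : H.Adj y w := mem_twins htvy h1 hwy
      refine ⟨h2, ?_⟩
      rintro rfl
      exact H.irrefl hw
  · rintro ⟨hw, hwu⟩
    by_cases hwv : w = v
    · subst hwv
      exact ⟨(mem_twins (twins_symm htvy) hadj.symm huv2).symm, Ne.symm hyv⟩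
    · have h1 : H.Adj v w := mem_twins (twins_symm htvy) hw hwv
      have h2 : H.Adj u w := mem_twins (twins_symm htw) h1 hwu
      refine ⟨h2, ?_⟩
      rintro rfl
      exact H.irrefl hw

theorem stmt0 {V : Type*} (H : SimpleGraph V) (T : Set V) (u v : V)
    (hT : IsTwinCover H T) (hu : u ∈ T) (hv : v ∉ T) (htw : Twins H u v) :
    IsTwinCover H (T \ {u}) := by
  have hne : u ≠ v := fun h => hv (h ▸ hu)
  intro x y hadj hntw
  rcases hT x y hadj hntw with hx | hy
  · by_cases hxu : x = u
    · subst hxu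
      right
      exact ⟨key hT hv hne htw y hadj hntw, fun h => H.irrefl (h ▸ hadj)⟩
    · exact Or.inl ⟨hx, hxu⟩
  · by_cases hyu : y = u
    · left
      have hadj2 : H.Adj u x := hyu ▸ hadj.symm
      have hntw2 : ¬ Twins H u x := fun h => hntw (hyu ▸ twins_symm h)
      refine ⟨key hT hv hne htw x hadj2 hntw2, ?_⟩
      rintro rfl
      exact H.irrefl hadj2
    · exact Or.inr ⟨hy, hyu⟩
end

section
/- If S is a twin cover of a graph G, then every connected component of G − S is a complete graph, and any two vertices in the same connected component of G − S have the same neighborhood in S. -/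
/-- If `S` is a twin cover, then every connected component of `G - S` is a complete
graph and any two vertices in the same component of `G - S` have the same
neighborhood in `S`. -/
theorem stmt4 {V : Type*} (G : SimpleGraph V) (S : Set V) (hS : IsTwinCover G S) :
    ∀ u v : ↥(Sᶜ), (G.induce Sᶜ).Reachable u v →
      (u ≠ v → G.Adj ↑u ↑v) ∧ (∀ s ∈ S, (G.Adj ↑u s ↔ G.Adj ↑v s)) := by
  have twin_key : ∀ {u v x : V}, Twins G u v → x ≠ u → x ≠ v →
      (G.Adj u x ↔ G.Adj v x) := by
    intro u v x h hxu hxv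
    have := Set.ext_iff.mp h x
    simpa [Set.mem_diff, hxu, hxv, SimpleGraph.mem_neighborSet] using this
  intro u v h
  obtain ⟨w⟩ := h
  induction w with
  | nil => exact ⟨fun h => absurd rfl h, fun s _ => Iff.rfl⟩
  | @cons a b c h' p ih =>
    have hab : G.Adj ↑a ↑b := h'
    have htw : Twins G ↑a ↑b := by
      by_contra ht
      rcases hS _ _ hab ht with hs | hs
      · exact a.2 hs
      · exact b.2 hs
    refine ⟨?_, ?_⟩
    · intro hac
      by_cases hbc : b = c
      · subst hbc; exact hab
      · have hvc : G.Adj ↑b ↑c := ih.1 hbc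
        have hcne : (↑c : V) ≠ ↑a := fun h => hac (Subtype.ext h.symm)
        have hcnb : (↑c : V) ≠ ↑b := fun h => hbc (Subtype.ext h.symm)
        exact (twin_key htw hcne hcnb).mpr hvc
    · intro s hs
      have hsa : s ≠ (↑a : V) := fun h => a.2 (h ▸ hs)
      have hsb : s ≠ (↑b : V) := fun h => b.2 (h ▸ hs)
      exact (twin_key htw hsa hsb).trans (ih.2 s hs)
end

section
/- If S is a twin cover of a graph G with |S| = p and every twin class of G − S has at most s vertices, then the vertex integrity of G satisfies vi(G) ≤ p + 2^p · s. (In particular, every connected component of G − S has at most 2^p · s vertices.) -/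
/-- The twin class of a vertex `v`. -/
def twinClass {V : Type*} (G : SimpleGraph V) (v : V) : Set V :=
  {u | u = v ∨ Twins G u v}

/-- The maximum order of a connected component of `G - S`. -/
noncomputable def compMaxOrder {V : Type*} (G : SimpleGraph V) (S : Set V) : ℕ :=
  sSup {n | ∃ C : (G.induce Sᶜ).ConnectedComponent, n = C.supp.ncard}

/-- The vertex integrity of `G`:
`min over S of (|S| + max order of a component of G - S)`. -/
noncomputable def vi {V : Type*} (G : SimpleGraph V) : ℕ :=
  sInf {m | ∃ S : Set V, m = S.ncard + compMaxOrder G S}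

/-- If `S` is a twin cover of size `p` and every twin class of `G - S` has at most
`s` vertices, then `vi(G) ≤ p + 2^p * s`; in particular every connected component
of `G - S` has at most `2^p * s` vertices. -/
theorem stmt6 {V : Type*} [Fintype V] (G : SimpleGraph V) (S : Set V) (p s : ℕ)
    (hS : IsTwinCover G S) (hp : S.ncard = p)
    (hcls : ∀ v : ↥(Sᶜ), (twinClass (G.induce Sᶜ) v).ncard ≤ s) :
    vi G ≤ p + 2 ^ p * s ∧
      ∀ C : (G.induce Sᶜ).ConnectedComponent, C.supp.ncard ≤ 2 ^ p * s := by
  -- Every edge of `G - S` joins twins (in `G - S`).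
  have hadjtw : ∀ u v : ↥(Sᶜ), (G.induce Sᶜ).Adj u v → Twins (G.induce Sᶜ) u v := by
    intro u v huv
    have hGuv : G.Adj ↑u ↑v := huv
    have htw : Twins G ↑u ↑v := by
      by_contra h
      rcases hS ↑u ↑v hGuv h with h1 | h1
      · exact u.2 h1
      · exact v.2 h1
    ext w
    simp only [Set.mem_diff, SimpleGraph.mem_neighborSet, Set.mem_singleton_iff,
      SimpleGraph.comap_adj, Function.Embedding.coe_subtype]
    constructor
    · rintro ⟨hw, hwv⟩
      have hmem : (↑w : V) ∈ G.neighborSet ↑u \ {↑v} :=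
        ⟨hw, fun h => hwv (Subtype.ext h)⟩
      rw [htw] at hmem
      exact ⟨hmem.1, fun h => hmem.2 (congrArg Subtype.val h)⟩
    · rintro ⟨hw, hwu⟩
      have hmem : (↑w : V) ∈ G.neighborSet ↑v \ {↑u} :=
        ⟨hw, fun h => hwu (Subtype.ext h)⟩
      rw [← htw] at hmem
      exact ⟨hmem.1, fun h => hmem.2 (congrArg Subtype.val h)⟩
  -- Adjacency in `G - S` is "transitive modulo equality".
  have htrans : ∀ u v w : ↥(Sᶜ), (G.induce Sᶜ).Adj u v → (G.induce Sᶜ).Adj v w →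
      u = w ∨ (G.induce Sᶜ).Adj u w := by
    intro u v w h1 h2
    by_cases huw : u = w
    · exact Or.inl huw
    · right
      have htw := hadjtw u v h1
      have hmem : w ∈ (G.induce Sᶜ).neighborSet v \ {u} :=
        ⟨h2, fun h => huw (Set.mem_singleton_iff.mp h).symm⟩
      rw [← htw] at hmem
      exact hmem.1
  -- Reachability in `G - S` implies equality or adjacency.
  have hwalk : ∀ u v : ↥(Sᶜ), (G.induce Sᶜ).Reachable u v →
      u = v ∨ (G.induce Sᶜ).Adj u v := by
    intro u v h
    obtain ⟨q⟩ := h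
    induction q with
    | nil => exact Or.inl rfl
    | cons h q ih =>
      rcases ih with rfl | hadj
      · exact Or.inr h
      · exact htrans _ _ _ h hadj
  -- Every component of `G - S` lies in a single twin class, so has ≤ s vertices.
  have hcomp : ∀ C : (G.induce Sᶜ).ConnectedComponent, C.supp.ncard ≤ s := by
    intro C
    obtain ⟨v, rfl⟩ := C.exists_rep
    have hsub : ((G.induce Sᶜ).connectedComponentMk v).supp ⊆ twinClass (G.induce Sᶜ) v := by
      intro u hu
      have hmk : (G.induce Sᶜ).connectedComponentMk u = (G.induce Sᶜ).connectedComponentMk v :=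
        hu
      have hr : (G.induce Sᶜ).Reachable u v := SimpleGraph.ConnectedComponent.exact hmk
      rcases hwalk u v hr with rfl | hadj
      · exact Or.inl rfl
      · exact Or.inr (hadjtw u v hadj)
    calc ((G.induce Sᶜ).connectedComponentMk v).supp.ncard
        ≤ (twinClass (G.induce Sᶜ) v).ncard := Set.ncard_le_ncard hsub (Set.toFinite _)
      _ ≤ s := hcls v
  have hbound : ∀ C : (G.induce Sᶜ).ConnectedComponent, C.supp.ncard ≤ 2 ^ p * s := by
    intro C
    exact (hcomp C).trans (le_mul_of_one_le_left (Nat.zero_le _) Nat.one_le_two_pow)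
  refine ⟨?_, hbound⟩
  have hmax : compMaxOrder G S ≤ 2 ^ p * s := by
    apply csSup_le'
    rintro n ⟨C, rfl⟩
    exact hbound C
  calc vi G ≤ S.ncard + compMaxOrder G S := Nat.sInf_le ⟨S, rfl⟩
    _ ≤ p + 2 ^ p * s := by rw [hp]; exact Nat.add_le_add_left hmax _
end

section
/- For every finite graph G, the number of vertices of degree different from 2 is at most 4 times the max-leaf number: |V_{≠2}(G)| ≤ 4·ml(G). -/
/-- The degree of `v` in `G` (number of neighbors). -/
noncomputable def degCount {V : Type*} (G : SimpleGraph V) (v : V) : ℕ :=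
  {u | G.Adj v u}.ncard

/-- `F` is a spanning forest of `G`: a subgraph of `G` that is acyclic and has the
same reachability relation as `G` (i.e., a spanning tree of each component). -/
def IsSpanningForest {V : Type*} (G F : SimpleGraph V) : Prop :=
  F ≤ G ∧ F.IsAcyclic ∧ ∀ u v : V, F.Reachable u v ↔ G.Reachable u v

/-- The max-leaf number of `G`: the maximum, over spanning forests `F` of `G`, of
the number of vertices of degree at most 1 in `F` (for each component with at
least two vertices these are exactly the leaves of its spanning tree; each
isolated vertex contributes 1). For disconnected graphs this equals the sum of
the max-leaf numbers of the components. -/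
noncomputable def mln {V : Type*} (G : SimpleGraph V) : ℕ :=
  sSup {n | ∃ F : SimpleGraph V, IsSpanningForest G F ∧
    {v | degCount F v ≤ 1}.ncard = n}

section Aux
open SimpleGraph Set

variable {V : Type*} {G F : SimpleGraph V} {x y : V}

lemma sup_edge_adj (hxy : x ≠ y) (a b : V) :
    (F ⊔ SimpleGraph.edge x y).Adj a b ↔ F.Adj a b ∨ (a = x ∧ b = y) ∨ (a = y ∧ b = x) := by
  rw [sup_adj, edge_adj]
  constructor
  · rintro (h | ⟨(⟨rfl, rfl⟩|⟨rfl, rfl⟩), hne⟩) <;> tauto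
  · rintro (h | ⟨rfl, rfl⟩ | ⟨rfl, rfl⟩) <;> simp_all [hxy.symm, hxy]

lemma sup_edge_minus (hxy : x ≠ y) (hnadj : ¬ F.Adj x y) :
    (F ⊔ SimpleGraph.edge x y) \ SimpleGraph.fromEdgeSet {s(x, y)} = F := by
  ext a b
  simp only [sdiff_adj, sup_edge_adj hxy, fromEdgeSet_adj, Set.mem_singleton_iff, Sym2.eq_iff]
  constructor
  · rintro ⟨(h | ⟨rfl, rfl⟩ | ⟨rfl, rfl⟩), h2⟩ <;> tauto
  · intro h
    refine ⟨Or.inl h, ?_⟩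
    rintro ⟨(⟨rfl, rfl⟩ | ⟨rfl, rfl⟩), -⟩
    · exact hnadj h
    · exact hnadj h.symm

lemma reachable_isolated (hy : ∀ z, ¬ F.Adj y z) (h : F.Reachable y x) : y = x := by
  obtain ⟨w⟩ := h
  cases w with
  | nil => rfl
  | cons h' _ => exact absurd h' (hy _)

lemma sup_edge_acyclic (hac : F.IsAcyclic) (hxy : x ≠ y)
    (hy : ∀ z, ¬ F.Adj y z) : (F ⊔ SimpleGraph.edge x y).IsAcyclic := by
  have hnadj : ¬ F.Adj x y := fun h => hy x h.symm
  intro v c hc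
  by_cases he : s(x, y) ∈ c.edges
  · have := (adj_and_reachable_delete_edges_iff_exists_cycle
      (G := F ⊔ SimpleGraph.edge x y) (v := x) (w := y)).2 ⟨v, c, hc, he⟩
    rw [deleteEdges, sup_edge_minus hxy hnadj] at this
    exact hxy (reachable_isolated hy this.2.symm).symm
  · have hsub : ∀ e ∈ c.edges, e ∈ F.edgeSet := by
      intro e hee
      have h1 : e ∈ (F ⊔ SimpleGraph.edge x y).edgeSet := c.edges_subset_edgeSet hee
      induction e with
      | h a b =>
        rw [mem_edgeSet, sup_edge_adj hxy] at h1
        rcases h1 with h1 | ⟨rfl, rfl⟩ | ⟨rfl, rfl⟩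
        · exact h1
        · exact absurd hee he
        · exact absurd hee (by rwa [Sym2.eq_swap] at he)
    exact hac (c.transfer F hsub) (hc.transfer hsub)

lemma degCount_finite (H : SimpleGraph V) [Fintype V] (v : V) : {u | H.Adj v u}.Finite :=
  Set.toFinite _

lemma sup_edge_degCount_x [Fintype V] (hxy : x ≠ y) (hnadj : ¬ F.Adj x y) :
    degCount (F ⊔ SimpleGraph.edge x y) x = degCount F x + 1 := by
  have : {u | (F ⊔ SimpleGraph.edge x y).Adj x u} = insert y {u | F.Adj x u} := by
    ext u
    simp only [Set.mem_setOf_eq, sup_edge_adj hxy, Set.mem_insert_iff]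
    constructor
    · rintro (h | ⟨-, rfl⟩ | ⟨h, -⟩)
      · tauto
      · tauto
      · exact absurd h hxy
    · rintro (rfl | h) <;> tauto
  have hny : y ∉ {u | F.Adj x u} := hnadj
  rw [degCount, this, Set.ncard_insert_of_notMem hny, degCount]

lemma sup_edge_degCount_y [Fintype V] (hxy : x ≠ y) (hy : ∀ z, ¬ F.Adj y z) :
    degCount (F ⊔ SimpleGraph.edge x y) y = 1 := by
  have : {u | (F ⊔ SimpleGraph.edge x y).Adj y u} = {x} := by
    ext u
    simp only [Set.mem_setOf_eq, sup_edge_adj hxy, Set.mem_singleton_iff]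
    constructor
    · rintro (h | ⟨h, -⟩ | ⟨-, rfl⟩)
      · exact absurd h (hy u)
      · exact absurd h hxy.symm
      · rfl
    · rintro rfl; tauto
  rw [degCount, this, Set.ncard_singleton]

lemma sup_edge_degCount_other [Fintype V] (hxy : x ≠ y) {z : V} (hzx : z ≠ x) (hzy : z ≠ y) :
    degCount (F ⊔ SimpleGraph.edge x y) z = degCount F z := by
  have : {u | (F ⊔ SimpleGraph.edge x y).Adj z u} = {u | F.Adj z u} := by
    ext u
    simp only [Set.mem_setOf_eq, sup_edge_adj hxy]
    constructor
    · rintro (h | ⟨rfl, -⟩ | ⟨rfl, -⟩)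
      · exact h
      · exact absurd rfl hzx
      · exact absurd rfl hzy
    · tauto
  rw [degCount, this, degCount]



section Counting
variable [Fintype V]

lemma ncard_bound1 {A D NEW A' : Set V} (h : (A \ D) ∪ NEW ⊆ A')
    (hdisj : Disjoint (A \ D) NEW) : A.ncard + NEW.ncard ≤ A'.ncard + D.ncard := by
  have h1 : A.ncard ≤ (A \ D).ncard + D.ncard := Set.ncard_le_ncard_diff_add_ncard A D
  have h2 : (A \ D).ncard + NEW.ncard = ((A \ D) ∪ NEW).ncard :=
    (Set.ncard_union_eq hdisj).symm
  have h3 : ((A \ D) ∪ NEW).ncard ≤ A'.ncard := Set.ncard_le_ncard h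
  omega

lemma ncard_bound2 {A N M A' : Set V} (h : A' ⊆ (A \ N) ∪ M) (hN : N ⊆ A) :
    A'.ncard + N.ncard ≤ A.ncard + M.ncard := by
  have h1 : A'.ncard ≤ (A \ N).ncard + M.ncard :=
    le_trans (Set.ncard_le_ncard h) (Set.ncard_union_le _ _)
  have h2 : (A \ N).ncard = A.ncard - N.ncard := Set.ncard_diff hN
  have h3 : N.ncard ≤ A.ncard := Set.ncard_le_ncard hN
  omega

lemma ncard_insert_inter_le (S A : Set V) (y : V) :
    (insert y S ∩ A).ncard ≤ (S ∩ A).ncard + 1 := by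
  have h : insert y S ∩ A ⊆ insert y (S ∩ A) := by
    rintro v ⟨(rfl | hv), hA⟩
    · exact mem_insert _ _
    · exact mem_insert_of_mem _ ⟨hv, hA⟩
  exact le_trans (Set.ncard_le_ncard h) (Set.ncard_insert_le _ _)

lemma ncard_insert_inter_eq (S A : Set V) {y : V} (hy : y ∉ A) :
    (insert y S ∩ A).ncard = (S ∩ A).ncard := by
  congr 1
  ext v
  constructor
  · rintro ⟨(rfl | hv), hA⟩
    · exact absurd hA hy
    · exact ⟨hv, hA⟩
  · rintro ⟨hv, hA⟩
    exact ⟨mem_insert_of_mem _ hv, hA⟩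

end Counting

lemma closed_reach {S : Set V} (hS : ∀ u ∈ S, ∀ w, G.Adj u w → w ∈ S)
    {u v : V} (hu : u ∈ S) (h : G.Reachable u v) : v ∈ S := by
  obtain ⟨w⟩ := h
  induction w with
  | nil => exact hu
  | cons h' p ih => exact ih (hS _ hu _ h')

lemma edge_le (h : G.Adj x y) : SimpleGraph.edge x y ≤ G := by
  intro a b hab
  rw [edge_adj] at hab
  rcases hab with ⟨(⟨rfl, rfl⟩ | ⟨rfl, rfl⟩), -⟩
  · exact h
  · exact h.symm

lemma pendant_reach {S : Set V}
    (hre : ∀ ⦃u v⦄, u ∈ S → v ∈ S → G.Reachable u v → F.Reachable u v)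
    {F' : SimpleGraph V} (hFF' : F ≤ F') (hadj' : F'.Adj x y) (hx : x ∈ S) (hGxy : G.Adj x y) :
    ∀ ⦃u v⦄, u ∈ insert y S → v ∈ insert y S → G.Reachable u v → F'.Reachable u v := by
  have key : ∀ ⦃v⦄, v ∈ S → G.Reachable y v → F'.Reachable y v := by
    intro v hv hyv
    have hxv : G.Reachable x v := (hGxy.reachable).trans hyv
    exact (hadj'.symm.reachable).trans ((hre hx hv hxv).mono hFF')
  rintro u v (rfl | hu) (rfl | hv) h
  · rfl
  · exact key hv h
  · exact (key hu h.symm).symm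
  · exact (hre hu hv h).mono hFF'

section Main
variable [Fintype V]

def leafS (F : SimpleGraph V) (S : Set V) : Set V := S ∩ {v | degCount F v ≤ 1}
def kS (G : SimpleGraph V) (S : Set V) : Set V := S ∩ {v | degCount G v ≠ 2}
def liveS (G F : SimpleGraph V) (S : Set V) : Set V :=
  S ∩ {v | degCount F v ≤ 1 ∧ ∃ w, w ∉ S ∧ G.Adj v w}

structure Grow (G : SimpleGraph V) where
  S : Set V
  F : SimpleGraph V
  hFG : F ≤ G
  hac : F.IsAcyclic
  hsupp : ∀ ⦃v w : V⦄, F.Adj v w → v ∈ S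
  hreach : ∀ ⦃u v : V⦄, u ∈ S → v ∈ S → G.Reachable u v → F.Reachable u v
  hinv : (kS G S).ncard + (liveS G F S).ncard ≤ 4 * (leafS F S).ncard

lemma step_alpha (st : Grow G) (hy : y ∉ st.S) (hx : x ∈ st.S) (hadj : G.Adj y x)
    (hint : 2 ≤ degCount st.F x) : ∃ st' : Grow G, st'.S = insert y st.S := by
  obtain ⟨S, F, hFG, hac, hsupp, hreach, hinv⟩ := st
  simp only at hy hx hint ⊢
  have hxy : x ≠ y := fun h => hy (h ▸ hx)
  have hyiso : ∀ z, ¬F.Adj y z := fun z h => hy (hsupp h)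
  have hnadj : ¬F.Adj x y := fun h => hyiso x h.symm
  set F' := F ⊔ SimpleGraph.edge x y with hF'
  have hadjF' : F'.Adj x y := by rw [hF', sup_edge_adj hxy]; tauto
  have hdegy : degCount F' y = 1 := sup_edge_degCount_y hxy hyiso
  have hdegx : degCount F' x = degCount F x + 1 := sup_edge_degCount_x hxy hnadj
  have hdego : ∀ z, z ≠ x → z ≠ y → degCount F' z = degCount F z :=
    fun z h1 h2 => sup_edge_degCount_other hxy h1 h2
  refine ⟨⟨insert y S, F', sup_le hFG (edge_le hadj.symm), sup_edge_acyclic hac hxy hyiso,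
      ?_, pendant_reach hreach le_sup_left hadjF' hx hadj.symm, ?_⟩, rfl⟩
  · intro v w h
    rw [hF', sup_edge_adj hxy] at h
    rcases h with h | ⟨rfl, -⟩ | ⟨rfl, -⟩
    · exact mem_insert_of_mem _ (hsupp h)
    · exact mem_insert_of_mem _ hx
    · exact mem_insert _ _
  · -- invariant
    have hk : (kS G (insert y S)).ncard ≤ (kS G S).ncard + 1 := ncard_insert_inter_le _ _ _
    have hleaf : (leafS F S).ncard + ({y} : Set V).ncard ≤
        (leafS F' (insert y S)).ncard + (∅ : Set V).ncard := by
      apply ncard_bound1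
      · rintro v (⟨⟨hvS, hdeg⟩, -⟩ | rfl)
        · have hdeg' : degCount F v ≤ 1 := hdeg
          have hvx : v ≠ x := fun h => by rw [h] at hdeg'; omega
          have hvy : v ≠ y := fun h => hy (h ▸ hvS)
          refine ⟨mem_insert_of_mem _ hvS, ?_⟩
          show degCount F' v ≤ 1
          rw [hdego v hvx hvy]; exact hdeg'
        · exact ⟨mem_insert _ _, hdegy.le⟩
      · rw [Set.disjoint_singleton_right]
        rintro ⟨⟨hvS, -⟩, -⟩
        exact hy hvS
    have hlive : (liveS G F' (insert y S)).ncard + (∅ : Set V).ncard ≤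
        (liveS G F S).ncard + ({y} : Set V).ncard := by
      apply ncard_bound2
      · rintro v ⟨hvS', hdeg', w, hwS', hadjw⟩
        rcases hvS' with rfl | hvS
        · exact Or.inr rfl
        · left
          have hvy : v ≠ y := fun h => hy (h ▸ hvS)
          have hdeg'' : degCount F' v ≤ 1 := hdeg'
          have hvx : v ≠ x := by
            rintro rfl
            rw [hdegx] at hdeg''
            omega
          refine ⟨⟨hvS, ?_, w, fun hw => hwS' (mem_insert_of_mem _ hw), hadjw⟩, notMem_empty v⟩
          show degCount F v ≤ 1
          rw [← hdego v hvx hvy]; exact hdeg''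
      · exact empty_subset _
    simp only [Set.ncard_singleton, Set.ncard_empty] at hleaf hlive
    omega

lemma step_beta (st : Grow G) {w1 w2 : V} (hx : x ∈ st.S) (hleafx : degCount st.F x ≤ 1)
    (hw1 : w1 ∉ st.S) (hw2 : w2 ∉ st.S) (hne : w1 ≠ w2)
    (ha1 : G.Adj x w1) (ha2 : G.Adj x w2) :
    ∃ st' : Grow G, st'.S = insert w2 (insert w1 st.S) := by
  obtain ⟨S, F, hFG, hac, hsupp, hreach, hinv⟩ := st
  simp only at hx hleafx hw1 hw2 ⊢
  have hxw1 : x ≠ w1 := fun h => hw1 (h ▸ hx)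
  have hxw2 : x ≠ w2 := fun h => hw2 (h ▸ hx)
  have hw1iso : ∀ z, ¬F.Adj w1 z := fun z h => hw1 (hsupp h)
  have hnadj1 : ¬F.Adj x w1 := fun h => hw1iso x h.symm
  set F1 := F ⊔ SimpleGraph.edge x w1 with hF1
  have hw2isoF1 : ∀ z, ¬F1.Adj w2 z := by
    intro z h
    rw [hF1, sup_edge_adj hxw1] at h
    rcases h with h | ⟨h, -⟩ | ⟨h, -⟩
    · exact hw2 (hsupp h)
    · exact hxw2 h.symm
    · exact hne h.symm
  have hnadj2 : ¬F1.Adj x w2 := fun h => hw2isoF1 x h.symm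
  set F2 := F1 ⊔ SimpleGraph.edge x w2 with hF2
  have hac2 : F2.IsAcyclic :=
    sup_edge_acyclic (sup_edge_acyclic hac hxw1 hw1iso) hxw2 hw2isoF1
  have hadj1' : F1.Adj x w1 := by rw [hF1, sup_edge_adj hxw1]; tauto
  have hadj2' : F2.Adj x w2 := by rw [hF2, sup_edge_adj hxw2]; tauto
  have hdegx2 : degCount F2 x = degCount F x + 2 := by
    rw [hF2, sup_edge_degCount_x hxw2 hnadj2, hF1, sup_edge_degCount_x hxw1 hnadj1]
  have hdegw1 : degCount F2 w1 = 1 := by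
    rw [hF2, sup_edge_degCount_other hxw2 hxw1.symm hne, hF1, sup_edge_degCount_y hxw1 hw1iso]
  have hdegw2 : degCount F2 w2 = 1 := by
    rw [hF2, sup_edge_degCount_y hxw2 hw2isoF1]
  have hdego : ∀ z, z ≠ x → z ≠ w1 → z ≠ w2 → degCount F2 z = degCount F z := by
    intro z h1 h2 h3
    rw [hF2, sup_edge_degCount_other hxw2 h1 h3, hF1, sup_edge_degCount_other hxw1 h1 h2]
  have hsupp2 : ∀ ⦃v w : V⦄, F2.Adj v w → v ∈ insert w2 (insert w1 S) := by
    intro v w h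
    rw [hF2, sup_edge_adj hxw2] at h
    rcases h with h | ⟨rfl, -⟩ | ⟨rfl, -⟩
    · rw [hF1, sup_edge_adj hxw1] at h
      rcases h with h | ⟨rfl, -⟩ | ⟨rfl, -⟩
      · exact mem_insert_of_mem _ (mem_insert_of_mem _ (hsupp h))
      · exact mem_insert_of_mem _ (mem_insert_of_mem _ hx)
      · exact mem_insert_of_mem _ (mem_insert _ _)
    · exact mem_insert_of_mem _ (mem_insert_of_mem _ hx)
    · exact mem_insert _ _
  have hre2 : ∀ ⦃u v : V⦄, u ∈ insert w2 (insert w1 S) → v ∈ insert w2 (insert w1 S) →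
      G.Reachable u v → F2.Reachable u v := by
    have h1 := pendant_reach hreach (le_sup_left : F ≤ F1) hadj1' hx ha1
    exact pendant_reach h1 (le_sup_left : F1 ≤ F2) hadj2' (mem_insert_of_mem _ hx) ha2
  refine ⟨⟨insert w2 (insert w1 S), F2,
      sup_le (sup_le hFG (edge_le ha1)) (edge_le ha2), hac2, hsupp2, hre2, ?_⟩, rfl⟩
  have hk : (kS G (insert w2 (insert w1 S))).ncard ≤ (kS G S).ncard + 2 := by
    have := ncard_insert_inter_le (insert w1 S) {v | degCount G v ≠ 2} w2
    have := ncard_insert_inter_le S {v | degCount G v ≠ 2} w1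
    unfold kS; omega
  have hleaf : (leafS F S).ncard + ({w1, w2} : Set V).ncard ≤
      (leafS F2 (insert w2 (insert w1 S))).ncard + ({x} : Set V).ncard := by
    apply ncard_bound1
    · rintro v (⟨⟨hvS, hdeg⟩, hvx⟩ | rfl | rfl)
      · have hdeg' : degCount F v ≤ 1 := hdeg
        have hvx : v ≠ x := fun h => hvx (h ▸ rfl)
        have hv1 : v ≠ w1 := fun h => hw1 (h ▸ hvS)
        have hv2 : v ≠ w2 := fun h => hw2 (h ▸ hvS)
        refine ⟨mem_insert_of_mem _ (mem_insert_of_mem _ hvS), ?_⟩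
        show degCount F2 v ≤ 1
        rw [hdego v hvx hv1 hv2]; exact hdeg'
      · exact ⟨mem_insert_of_mem _ (mem_insert _ _), hdegw1.le⟩
      · exact ⟨mem_insert _ _, hdegw2.le⟩
    · rw [Set.disjoint_right]
      rintro v (rfl | rfl) ⟨⟨hvS, -⟩, -⟩
      · exact hw1 hvS
      · exact hw2 hvS
  have hlive : (liveS G F2 (insert w2 (insert w1 S))).ncard + ({x} : Set V).ncard ≤
      (liveS G F S).ncard + ({w1, w2} : Set V).ncard := by
    apply ncard_bound2
    · rintro v ⟨hvS', hdeg', w, hwS', hadjw⟩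
      have hdeg'' : degCount F2 v ≤ 1 := hdeg'
      rcases hvS' with rfl | rfl | hvS
      · exact Or.inr (Or.inr rfl)
      · exact Or.inr (Or.inl rfl)
      · have hvx : v ≠ x := by
          rintro rfl
          rw [hdegx2] at hdeg''
          omega
        have hv1 : v ≠ w1 := fun h => hw1 (h ▸ hvS)
        have hv2 : v ≠ w2 := fun h => hw2 (h ▸ hvS)
        refine Or.inl ⟨⟨hvS, ?_, w,
          fun hw => hwS' (mem_insert_of_mem _ (mem_insert_of_mem _ hw)), hadjw⟩, ?_⟩
        · show degCount F v ≤ 1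
          rw [← hdego v hvx hv1 hv2]; exact hdeg''
        · simpa using hvx
    · rintro v (rfl : v = x)
      exact ⟨hx, hleafx, w1, hw1, ha1⟩
  rw [Set.ncard_pair hne, Set.ncard_singleton] at hleaf hlive
  omega

lemma step_gamma2 (st : Grow G) {w1 w2 : V} (hy : y ∉ st.S) (hx : x ∈ st.S) (hadj : G.Adj y x)
    (halpha : ∀ ⦃z u : V⦄, z ∉ st.S → u ∈ st.S → G.Adj z u → degCount st.F u ≤ 1)
    (hbeta : ∀ ⦃u : V⦄, u ∈ st.S → degCount st.F u ≤ 1 →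
      ∀ ⦃w w' : V⦄, w ∉ st.S → w' ∉ st.S → G.Adj u w → G.Adj u w' → w = w')
    (hw1 : w1 ∉ st.S) (hw2 : w2 ∉ st.S) (hne : w1 ≠ w2)
    (ha1 : G.Adj y w1) (ha2 : G.Adj y w2) :
    ∃ st' : Grow G, st'.S = insert w2 (insert w1 (insert y st.S)) := by
  obtain ⟨S, F, hFG, hac, hsupp, hreach, hinv⟩ := st
  simp only at hy hx hw1 hw2 halpha hbeta ⊢
  have hxy : x ≠ y := fun h => hy (h ▸ hx)
  have hyw1 : y ≠ w1 := ha1.ne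
  have hyw2 : y ≠ w2 := ha2.ne
  have hxw1 : x ≠ w1 := fun h => hw1 (h ▸ hx)
  have hxw2 : x ≠ w2 := fun h => hw2 (h ▸ hx)
  have hyiso : ∀ z, ¬F.Adj y z := fun z h => hy (hsupp h)
  have hnadj : ¬F.Adj x y := fun h => hyiso x h.symm
  set F1 := F ⊔ SimpleGraph.edge x y with hF1
  have hw1isoF1 : ∀ z, ¬F1.Adj w1 z := by
    intro z h
    rw [hF1, sup_edge_adj hxy] at h
    rcases h with h | ⟨h, -⟩ | ⟨h, -⟩
    · exact hw1 (hsupp h)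
    · exact hxw1 h.symm
    · exact hyw1 h.symm
  have hnadj1 : ¬F1.Adj y w1 := fun h => hw1isoF1 y h.symm
  set F2 := F1 ⊔ SimpleGraph.edge y w1 with hF2
  have hw2isoF2 : ∀ z, ¬F2.Adj w2 z := by
    intro z h
    rw [hF2, sup_edge_adj hyw1] at h
    rcases h with h | ⟨h, -⟩ | ⟨h, -⟩
    · rw [hF1, sup_edge_adj hxy] at h
      rcases h with h | ⟨h, -⟩ | ⟨h, -⟩
      · exact hw2 (hsupp h)
      · exact hxw2 h.symm
      · exact hyw2 h.symm
    · exact hyw2 h.symm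
    · exact hne h.symm
  have hnadj2 : ¬F2.Adj y w2 := fun h => hw2isoF2 y h.symm
  set F3 := F2 ⊔ SimpleGraph.edge y w2 with hF3
  have hac3 : F3.IsAcyclic :=
    sup_edge_acyclic (sup_edge_acyclic (sup_edge_acyclic hac hxy hyiso) hyw1 hw1isoF1)
      hyw2 hw2isoF2
  have hadj1' : F1.Adj x y := by rw [hF1, sup_edge_adj hxy]; tauto
  have hadj2' : F2.Adj y w1 := by rw [hF2, sup_edge_adj hyw1]; tauto
  have hadj3' : F3.Adj y w2 := by rw [hF3, sup_edge_adj hyw2]; tauto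
  have hdegy3 : degCount F3 y = 3 := by
    rw [hF3, sup_edge_degCount_x hyw2 hnadj2, hF2, sup_edge_degCount_x hyw1 hnadj1,
      hF1, sup_edge_degCount_y hxy hyiso]
  have hdegx3 : degCount F3 x = degCount F x + 1 := by
    rw [hF3, sup_edge_degCount_other hyw2 hxy hxw2, hF2,
      sup_edge_degCount_other hyw1 hxy hxw1, hF1, sup_edge_degCount_x hxy hnadj]
  have hdegw1 : degCount F3 w1 = 1 := by
    rw [hF3, sup_edge_degCount_other hyw2 hyw1.symm hne, hF2,
      sup_edge_degCount_y hyw1 hw1isoF1]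
  have hdegw2 : degCount F3 w2 = 1 := by
    rw [hF3, sup_edge_degCount_y hyw2 hw2isoF2]
  have hdego : ∀ z, z ≠ x → z ≠ y → z ≠ w1 → z ≠ w2 → degCount F3 z = degCount F z := by
    intro z h1 h2 h3 h4
    rw [hF3, sup_edge_degCount_other hyw2 h2 h4, hF2, sup_edge_degCount_other hyw1 h2 h3,
      hF1, sup_edge_degCount_other hxy h1 h2]
  have hsupp3 : ∀ ⦃v w : V⦄, F3.Adj v w → v ∈ insert w2 (insert w1 (insert y S)) := by
    intro v w h
    rw [hF3, sup_edge_adj hyw2] at h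
    rcases h with h | ⟨rfl, -⟩ | ⟨rfl, -⟩
    · rw [hF2, sup_edge_adj hyw1] at h
      rcases h with h | ⟨rfl, -⟩ | ⟨rfl, -⟩
      · rw [hF1, sup_edge_adj hxy] at h
        rcases h with h | ⟨rfl, -⟩ | ⟨rfl, -⟩
        · exact mem_insert_of_mem _ (mem_insert_of_mem _ (mem_insert_of_mem _ (hsupp h)))
        · exact mem_insert_of_mem _ (mem_insert_of_mem _ (mem_insert_of_mem _ hx))
        · exact mem_insert_of_mem _ (mem_insert_of_mem _ (mem_insert _ _))
      · exact mem_insert_of_mem _ (mem_insert_of_mem _ (mem_insert _ _))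
      · exact mem_insert_of_mem _ (mem_insert _ _)
    · exact mem_insert_of_mem _ (mem_insert_of_mem _ (mem_insert _ _))
    · exact mem_insert _ _
  have hre3 : ∀ ⦃u v : V⦄, u ∈ insert w2 (insert w1 (insert y S)) →
      v ∈ insert w2 (insert w1 (insert y S)) → G.Reachable u v → F3.Reachable u v := by
    have h1 := pendant_reach hreach (le_sup_left : F ≤ F1) hadj1' hx hadj.symm
    have h2 := pendant_reach h1 (le_sup_left : F1 ≤ F2) hadj2' (mem_insert _ _) ha1
    exact pendant_reach h2 (le_sup_left : F2 ≤ F3) hadj3'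
      (mem_insert_of_mem _ (mem_insert _ _)) ha2
  set N := S ∩ {u | G.Adj y u} with hN
  have hNx : x ∈ N := ⟨hx, hadj⟩
  have hNlive : N ⊆ liveS G F S := by
    rintro u ⟨huS, hadju⟩
    exact ⟨huS, halpha hy huS hadju, y, hy, (hadju : G.Adj y u).symm⟩
  have hNt : 1 ≤ N.ncard := by
    rw [Nat.one_le_iff_ne_zero, ← Nat.pos_iff_ne_zero, Set.ncard_pos]
    exact ⟨x, hNx⟩
  refine ⟨⟨insert w2 (insert w1 (insert y S)), F3,
      sup_le (sup_le (sup_le hFG (edge_le hadj.symm)) (edge_le ha1)) (edge_le ha2),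
      hac3, hsupp3, hre3, ?_⟩, rfl⟩
  have hk : (kS G (insert w2 (insert w1 (insert y S)))).ncard ≤ (kS G S).ncard + 3 := by
    have := ncard_insert_inter_le (insert w1 (insert y S)) {v | degCount G v ≠ 2} w2
    have := ncard_insert_inter_le (insert y S) {v | degCount G v ≠ 2} w1
    have := ncard_insert_inter_le S {v | degCount G v ≠ 2} y
    unfold kS; omega
  have hleaf : (leafS F S).ncard + ({w1, w2} : Set V).ncard ≤
      (leafS F3 (insert w2 (insert w1 (insert y S)))).ncard + ({x} : Set V).ncard := by
    apply ncard_bound1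
    · rintro v (⟨⟨hvS, hdeg⟩, hvx⟩ | rfl | rfl)
      · have hdeg' : degCount F v ≤ 1 := hdeg
        have hvx : v ≠ x := fun h => hvx (h ▸ rfl)
        have hvy : v ≠ y := fun h => hy (h ▸ hvS)
        have hv1 : v ≠ w1 := fun h => hw1 (h ▸ hvS)
        have hv2 : v ≠ w2 := fun h => hw2 (h ▸ hvS)
        refine ⟨mem_insert_of_mem _ (mem_insert_of_mem _ (mem_insert_of_mem _ hvS)), ?_⟩
        show degCount F3 v ≤ 1
        rw [hdego v hvx hvy hv1 hv2]; exact hdeg'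
      · exact ⟨mem_insert_of_mem _ (mem_insert _ _), hdegw1.le⟩
      · exact ⟨mem_insert _ _, hdegw2.le⟩
    · rw [Set.disjoint_right]
      rintro v (rfl | rfl) ⟨⟨hvS, -⟩, -⟩
      · exact hw1 hvS
      · exact hw2 hvS
  have hlive : (liveS G F3 (insert w2 (insert w1 (insert y S)))).ncard + N.ncard ≤
      (liveS G F S).ncard + ({w1, w2} : Set V).ncard := by
    apply ncard_bound2 _ hNlive
    rintro v ⟨hvS', hdeg', w, hwS', hadjw⟩
    have hdeg'' : degCount F3 v ≤ 1 := hdeg'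
    rcases hvS' with rfl | rfl | rfl | hvS
    · exact Or.inr (Or.inr rfl)
    · exact Or.inr (Or.inl rfl)
    · rw [hdegy3] at hdeg''; omega
    · by_cases hvN : v ∈ N
      · exfalso
        have hvleaf : degCount F v ≤ 1 := halpha hy hvS hvN.2
        have hwS : w ∉ S := fun h =>
          hwS' (mem_insert_of_mem _ (mem_insert_of_mem _ (mem_insert_of_mem _ h)))
        have : w = y := hbeta hvS hvleaf hwS hy hadjw (hvN.2 : G.Adj y v).symm
        exact hwS' (this ▸ mem_insert_of_mem _ (mem_insert_of_mem _ (mem_insert _ _)))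
      · have hvx : v ≠ x := fun h => hvN (h ▸ hNx)
        have hvy : v ≠ y := fun h => hy (h ▸ hvS)
        have hv1 : v ≠ w1 := fun h => hw1 (h ▸ hvS)
        have hv2 : v ≠ w2 := fun h => hw2 (h ▸ hvS)
        refine Or.inl ⟨⟨hvS, ?_, w, fun h =>
          hwS' (mem_insert_of_mem _ (mem_insert_of_mem _ (mem_insert_of_mem _ h))), hadjw⟩, hvN⟩
        show degCount F v ≤ 1
        rw [← hdego v hvx hvy hv1 hv2]; exact hdeg''
  rw [Set.ncard_pair hne, Set.ncard_singleton] at hleaf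
  rw [Set.ncard_pair hne] at hlive
  omega

lemma step_gamma1 (st : Grow G) (hy : y ∉ st.S) (hx : x ∈ st.S) (hadj : G.Adj y x)
    (halpha : ∀ ⦃z u : V⦄, z ∉ st.S → u ∈ st.S → G.Adj z u → degCount st.F u ≤ 1)
    (hbeta : ∀ ⦃u : V⦄, u ∈ st.S → degCount st.F u ≤ 1 →
      ∀ ⦃w w' : V⦄, w ∉ st.S → w' ∉ st.S → G.Adj u w → G.Adj u w' → w = w')
    (hO : ∀ ⦃w w' : V⦄, w ∉ st.S → w' ∉ st.S → G.Adj y w → G.Adj y w' → w = w') :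
    ∃ st' : Grow G, st'.S = insert y st.S := by
  obtain ⟨S, F, hFG, hac, hsupp, hreach, hinv⟩ := st
  simp only at hy hx halpha hbeta hO ⊢
  have hxy : x ≠ y := fun h => hy (h ▸ hx)
  have hyiso : ∀ z, ¬F.Adj y z := fun z h => hy (hsupp h)
  have hnadj : ¬F.Adj x y := fun h => hyiso x h.symm
  set F' := F ⊔ SimpleGraph.edge x y with hF'
  have hadjF' : F'.Adj x y := by rw [hF', sup_edge_adj hxy]; tauto
  have hdegy : degCount F' y = 1 := sup_edge_degCount_y hxy hyiso
  have hdegx : degCount F' x = degCount F x + 1 := sup_edge_degCount_x hxy hnadj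
  have hdego : ∀ z, z ≠ x → z ≠ y → degCount F' z = degCount F z :=
    fun z h1 h2 => sup_edge_degCount_other hxy h1 h2
  set N := S ∩ {u | G.Adj y u} with hN
  set O := Sᶜ ∩ {u | G.Adj y u} with hOdef
  have hNx : x ∈ N := ⟨hx, hadj⟩
  have hNlive : N ⊆ liveS G F S := by
    rintro u ⟨huS, hadju⟩
    exact ⟨huS, halpha hy huS hadju, y, hy, (hadju : G.Adj y u).symm⟩
  have hNt : 1 ≤ N.ncard := by
    rw [Nat.one_le_iff_ne_zero, ← Nat.pos_iff_ne_zero, Set.ncard_pos]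
    exact ⟨x, hNx⟩
  have hOs : O.ncard ≤ 1 := by
    rcases O.eq_empty_or_nonempty with h | ⟨w0, hw0⟩
    · rw [h, Set.ncard_empty]; omega
    · have : O ⊆ {w0} := by
        rintro u ⟨huS, hadju⟩
        exact (hO huS hw0.1 hadju hw0.2 : u = w0)
      simpa using Set.ncard_le_ncard this
  have hdegGy : degCount G y = N.ncard + O.ncard := by
    have hun : {u | G.Adj y u} = N ∪ O := by
      rw [hN, hOdef]
      ext u
      by_cases h : u ∈ S <;> simp [h]
    have hdisj : Disjoint N O := by
      rw [Set.disjoint_left]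
      rintro u ⟨huS, -⟩ ⟨huc, -⟩
      exact huc huS
    rw [degCount, hun, Set.ncard_union_eq hdisj]
  refine ⟨⟨insert y S, F', sup_le hFG (edge_le hadj.symm), sup_edge_acyclic hac hxy hyiso,
      ?_, pendant_reach hreach le_sup_left hadjF' hx hadj.symm, ?_⟩, rfl⟩
  · intro v w h
    rw [hF', sup_edge_adj hxy] at h
    rcases h with h | ⟨rfl, -⟩ | ⟨rfl, -⟩
    · exact mem_insert_of_mem _ (hsupp h)
    · exact mem_insert_of_mem _ hx
    · exact mem_insert _ _
  · -- invariant
    have hleaf : (leafS F S).ncard + ({y} : Set V).ncard ≤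
        (leafS F' (insert y S)).ncard + ({x} : Set V).ncard := by
      apply ncard_bound1
      · rintro v (⟨⟨hvS, hdeg⟩, hvx⟩ | rfl)
        · have hdeg' : degCount F v ≤ 1 := hdeg
          have hvx : v ≠ x := fun h => hvx (h ▸ rfl)
          have hvy : v ≠ y := fun h => hy (h ▸ hvS)
          refine ⟨mem_insert_of_mem _ hvS, ?_⟩
          show degCount F' v ≤ 1
          rw [hdego v hvx hvy]; exact hdeg'
        · exact ⟨mem_insert _ _, hdegy.le⟩
      · rw [Set.disjoint_singleton_right]
        rintro ⟨⟨hvS, -⟩, -⟩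
        exact hy hvS
    have hlivemem : ∀ v ∈ liveS G F' (insert y S), v ∈ (liveS G F S \ N) ∪ {y} := by
      rintro v ⟨hvS', hdeg', w, hwS', hadjw⟩
      have hdeg'' : degCount F' v ≤ 1 := hdeg'
      rcases hvS' with rfl | hvS
      · exact Or.inr rfl
      · by_cases hvN : v ∈ N
        · exfalso
          have hvleaf : degCount F v ≤ 1 := halpha hy hvS hvN.2
          have hwS : w ∉ S := fun h => hwS' (mem_insert_of_mem _ h)
          have : w = y := hbeta hvS hvleaf hwS hy hadjw (hvN.2 : G.Adj y v).symm
          exact hwS' (this ▸ mem_insert _ _)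
        · have hvx : v ≠ x := fun h => hvN (h ▸ hNx)
          have hvy : v ≠ y := fun h => hy (h ▸ hvS)
          refine Or.inl ⟨⟨hvS, ?_, w, fun h => hwS' (mem_insert_of_mem _ h), hadjw⟩, hvN⟩
          show degCount F v ≤ 1
          rw [← hdego v hvx hvy]; exact hdeg''
    have hlive : (liveS G F' (insert y S)).ncard + N.ncard ≤
        (liveS G F S).ncard + O.ncard := by
      rcases O.eq_empty_or_nonempty with hOe | hOne
      · have h0 : liveS G F' (insert y S) ⊆ liveS G F S \ N := by
          intro v hv
          rcases hlivemem v hv with h | rfl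
          · exact h
          · exfalso
            obtain ⟨-, -, w, hwS', hadjw⟩ := hv
            have hwS : w ∉ S := fun h => hwS' (mem_insert_of_mem _ h)
            have : w ∈ O := ⟨hwS, hadjw⟩
            rw [hOe] at this
            exact this
        have := ncard_bound2 (M := (∅ : Set V)) (by simpa using h0) hNlive
        rw [hOe, Set.ncard_empty]
        simpa using this
      · have h1 : 1 ≤ O.ncard := by
          rw [Nat.one_le_iff_ne_zero, ← Nat.pos_iff_ne_zero, Set.ncard_pos]
          exact hOne
        have := ncard_bound2 (M := ({y} : Set V))
          (fun v hv => hlivemem v hv) hNlive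
        rw [Set.ncard_singleton] at this
        omega
    have hk2 : N.ncard + O.ncard = 2 →
        (kS G (insert y S)).ncard = (kS G S).ncard := by
      intro h2
      apply ncard_insert_inter_eq
      rw [mem_setOf_eq, hdegGy, h2]
      exact fun h => h rfl
    have hk1 : (kS G (insert y S)).ncard ≤ (kS G S).ncard + 1 :=
      ncard_insert_inter_le _ _ _
    simp only [Set.ncard_singleton] at hleaf
    by_cases h2 : N.ncard + O.ncard = 2
    · have := hk2 h2
      omega
    · omega

lemma step_delta (st : Grow G) {r : V} (hr : r ∉ st.S)
    (hclosed : ∀ ⦃z u : V⦄, z ∉ st.S → u ∈ st.S → ¬G.Adj z u) :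
    ∃ st' : Grow G, st'.S = insert r st.S := by
  obtain ⟨S, F, hFG, hac, hsupp, hreach, hinv⟩ := st
  simp only at hr hclosed ⊢
  have hSclosed : ∀ u ∈ S, ∀ w, G.Adj u w → w ∈ S := by
    intro u hu w hadj
    by_contra hw
    exact hclosed hw hu hadj.symm
  have hdegr : degCount F r = 0 := by
    rw [degCount, Set.ncard_eq_zero]
    ext z
    simp only [mem_setOf_eq, mem_empty_iff_false, iff_false]
    exact fun h => hr (hsupp h)
  refine ⟨⟨insert r S, F, hFG, hac, fun v w h => mem_insert_of_mem _ (hsupp h), ?_, ?_⟩, rfl⟩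
  · rintro u v (rfl | hu) (rfl | hv) h
    · rfl
    · exact absurd (closed_reach hSclosed hv h.symm) hr
    · exact absurd (closed_reach hSclosed hu h) hr
    · exact hreach hu hv h
  · have hk : (kS G (insert r S)).ncard ≤ (kS G S).ncard + 1 := ncard_insert_inter_le _ _ _
    have hleaf : (leafS F S).ncard + ({r} : Set V).ncard ≤
        (leafS F (insert r S)).ncard + (∅ : Set V).ncard := by
      apply ncard_bound1
      · rintro v (⟨⟨hvS, hdeg⟩, -⟩ | rfl)
        · exact ⟨mem_insert_of_mem _ hvS, hdeg⟩
        · exact ⟨mem_insert _ _, by show degCount F v ≤ 1; rw [hdegr]; omega⟩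
      · rw [Set.disjoint_singleton_right]
        rintro ⟨⟨hvS, -⟩, -⟩
        exact hr hvS
    have hlive : (liveS G F (insert r S)).ncard + (∅ : Set V).ncard ≤
        (liveS G F S).ncard + ({r} : Set V).ncard := by
      apply ncard_bound2
      · rintro v ⟨hvS', hdeg', w, hwS', hadjw⟩
        rcases hvS' with rfl | hvS
        · exact Or.inr rfl
        · exact Or.inl ⟨⟨hvS, hdeg', w, fun h => hwS' (mem_insert_of_mem _ h), hadjw⟩,
            notMem_empty v⟩
      · exact empty_subset _
    simp only [Set.ncard_singleton, Set.ncard_empty] at hleaf hlive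
    omega

lemma step_any (st : Grow G) (hne : st.S ≠ univ) : ∃ st' : Grow G, st.S ⊂ st'.S := by
  by_cases hA : ∃ y x, y ∉ st.S ∧ x ∈ st.S ∧ G.Adj y x ∧ 2 ≤ degCount st.F x
  · obtain ⟨y, x, hy, hx, hadj, hint⟩ := hA
    obtain ⟨st', hst'⟩ := step_alpha st hy hx hadj hint
    exact ⟨st', hst' ▸ Set.ssubset_insert hy⟩
  by_cases hB : ∃ x w1 w2, x ∈ st.S ∧ degCount st.F x ≤ 1 ∧ w1 ∉ st.S ∧ w2 ∉ st.S ∧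
      w1 ≠ w2 ∧ G.Adj x w1 ∧ G.Adj x w2
  · obtain ⟨x, w1, w2, hx, hlf, hw1, hw2, hne12, ha1, ha2⟩ := hB
    obtain ⟨st', hst'⟩ := step_beta st hx hlf hw1 hw2 hne12 ha1 ha2
    refine ⟨st', hst' ▸ ?_⟩
    exact (Set.ssubset_insert hw1).trans_subset (Set.subset_insert _ _)
  push_neg at hA hB
  have halpha : ∀ ⦃z u : V⦄, z ∉ st.S → u ∈ st.S → G.Adj z u → degCount st.F u ≤ 1 := by
    intro z u hz hu hadj
    have := hA z u hz hu hadj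
    omega
  have hbeta : ∀ ⦃u : V⦄, u ∈ st.S → degCount st.F u ≤ 1 →
      ∀ ⦃w w' : V⦄, w ∉ st.S → w' ∉ st.S → G.Adj u w → G.Adj u w' → w = w' := by
    intro u hu hlf w w' hw hw' haw haw'
    by_contra hne'
    exact (hB u w w' hu hlf hw hw' hne' haw) haw'
  by_cases hAdj : ∃ y x, y ∉ st.S ∧ x ∈ st.S ∧ G.Adj y x
  · obtain ⟨y, x, hy, hx, hadj⟩ := hAdj
    by_cases hs2 : ∃ w1 w2, w1 ∉ st.S ∧ w2 ∉ st.S ∧ w1 ≠ w2 ∧ G.Adj y w1 ∧ G.Adj y w2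
    · obtain ⟨w1, w2, hw1, hw2, hne12, ha1, ha2⟩ := hs2
      obtain ⟨st', hst'⟩ := step_gamma2 st hy hx hadj halpha hbeta hw1 hw2 hne12 ha1 ha2
      refine ⟨st', hst' ▸ ?_⟩
      exact (Set.ssubset_insert hy).trans_subset
        ((Set.subset_insert _ _).trans (Set.subset_insert _ _))
    · push_neg at hs2
      have hO : ∀ ⦃w w' : V⦄, w ∉ st.S → w' ∉ st.S → G.Adj y w → G.Adj y w' → w = w' := by
        intro w w' hw hw' haw haw'
        by_contra hne'
        exact (hs2 w w' hw hw' hne' haw) haw'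
      obtain ⟨st', hst'⟩ := step_gamma1 st hy hx hadj halpha hbeta hO
      exact ⟨st', hst' ▸ Set.ssubset_insert hy⟩
  · push_neg at hAdj
    obtain ⟨r, hr⟩ := (Set.ne_univ_iff_exists_notMem _).1 hne
    obtain ⟨st', hst'⟩ := step_delta st hr (fun z u hz hu hadj => hAdj z u hz hu hadj)
    exact ⟨st', hst' ▸ Set.ssubset_insert hr⟩

lemma grow_to_univ (n : ℕ) : ∀ st : Grow G, (st.Sᶜ).ncard ≤ n →
    ∃ st' : Grow G, st'.S = univ := by
  induction n with
  | zero =>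
    intro st h
    refine ⟨st, ?_⟩
    have : (st.Sᶜ).ncard = 0 := Nat.le_zero.1 h
    rw [Set.ncard_eq_zero (Set.toFinite _)] at this
    rw [← compl_empty_iff, this]
  | succ n ih =>
    intro st h
    by_cases hS : st.S = univ
    · exact ⟨st, hS⟩
    · obtain ⟨st', hsub⟩ := step_any st hS
      apply ih st'
      have h1 := Set.ncard_add_ncard_compl st.S
      have h2 := Set.ncard_add_ncard_compl st'.S
      have h3 : st.S.ncard < st'.S.ncard := Set.ncard_lt_ncard hsub (Set.toFinite _)
      have h4 : st'.S.ncard ≤ Nat.card V := by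
        rw [← Set.ncard_univ]
        exact Set.ncard_le_ncard (subset_univ _) (Set.toFinite _)
      omega

noncomputable def initGrow (G : SimpleGraph V) : Grow G where
  S := ∅
  F := ⊥
  hFG := bot_le
  hac := isAcyclic_bot
  hsupp := fun v w h => absurd h (by simp)
  hreach := fun u v hu => absurd hu (notMem_empty u)
  hinv := by
    simp only [kS, liveS, leafS, Set.empty_inter, Set.ncard_empty]
    omega

end Main
end Aux

open SimpleGraph Set in
/-- For every graph, `|V_{≠2}(G)| ≤ 4·ml(G)`. -/
theorem stmt10 {V : Type*} [Fintype V] (G : SimpleGraph V) :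
    {v | degCount G v ≠ 2}.ncard ≤ 4 * mln G := by
  obtain ⟨st, hS⟩ := grow_to_univ ((initGrow G).Sᶜ.ncard) (initGrow G) le_rfl
  have hsf : IsSpanningForest G st.F := by
    refine ⟨st.hFG, st.hac, fun u v => ⟨fun h => h.mono st.hFG, fun h => ?_⟩⟩
    exact st.hreach (by rw [hS]; trivial) (by rw [hS]; trivial) h
  have hmem : {v | degCount st.F v ≤ 1}.ncard ∈
      {n | ∃ F : SimpleGraph V, IsSpanningForest G F ∧ {v | degCount F v ≤ 1}.ncard = n} :=
    ⟨st.F, hsf, rfl⟩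
  have hbdd : BddAbove {n | ∃ F : SimpleGraph V, IsSpanningForest G F ∧
      {v | degCount F v ≤ 1}.ncard = n} := by
    refine ⟨Fintype.card V, ?_⟩
    rintro n ⟨F', -, rfl⟩
    calc {v | degCount F' v ≤ 1}.ncard ≤ (Set.univ : Set V).ncard :=
          Set.ncard_le_ncard (Set.subset_univ _) (Set.toFinite _)
      _ = Fintype.card V := by rw [Set.ncard_univ, Nat.card_eq_fintype_card]
  have h1 : {v | degCount st.F v ≤ 1}.ncard ≤ mln G := le_csSup hbdd hmem
  have h2 : {v | degCount G v ≠ 2}.ncard ≤ 4 * {v | degCount st.F v ≤ 1}.ncard := by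
    have hinv := st.hinv
    rw [hS] at hinv
    simp only [kS, leafS, liveS, Set.univ_inter] at hinv
    omega
  calc {v | degCount G v ≠ 2}.ncard ≤ 4 * {v | degCount st.F v ≤ 1}.ncard := h2
    _ ≤ 4 * mln G := Nat.mul_le_mul_left 4 h1
end
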